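/- Let (u,v,w,δ) ∈ ℝ⁴ satisfy δ² = Q(u,v,w), and assume S := 3 + 2(u+v+w) > 0 and N := 2(u+1) − (v+w)² > 0. Define r₁ := (√(N/S), 0, (v+w+1)/√S), r₂ := ((w(u+v+1) − (u+1)(v+1) + w²)/√(N·S), δ/√N, (u+w+1)/√S), and r₃ := ((v(w+u+1) − (w+1)(u+1) + v²)/√(N·S), −δ/√N, (u+v+1)/√S). Then r₁, r₂, r₃ are unit vectors with r₂·r₃ = u, r₃·r₁ = v, r₁·r₂ = w, r₁·(r₂ × r₃) = δ, and r₁ + r₂ + r₃ = (0, 0, √S). -/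

import Mathlib

/-!
Rescale the coordinates by `√(N S)`, `√N` and `√S`: each `rᵢ` is then `diagScale N S pᵢ` for a
vector `pᵢ` with polynomial entries (for `r₁` because `√(N/S) = N/√(N S)`). Inner products of
such vectors are weighted sums `p₀q₀/(N S) + p₁q₁/N + p₂q₂/S`, and triple products are
`p · (q × r)/(N S)`, so every claim becomes a rational identity in `u, v, w, δ`; these hold
modulo `δ² = Q(u, v, w)`.
-/

open Matrix

noncomputable def diagScale (N S : ℝ) (p : Fin 3 → ℝ) : Fin 3 → ℝ :=
  ![p 0 / √(N * S), p 1 / √N, p 2 / √S]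

theorem Real.sqrt_div_eq_div_sqrt_mul {x : ℝ} (hx : 0 ≤ x) (y : ℝ) :
    √(x / y) = x / √(x * y) := by
  rw [Real.sqrt_mul hx, ← div_div, Real.div_sqrt, Real.sqrt_div hx]

section diagScale

variable {N S : ℝ}

theorem diagScale_add (p q : Fin 3 → ℝ) :
    diagScale N S p + diagScale N S q = diagScale N S (p + q) := by
  ext i; fin_cases i <;> simp [diagScale, add_div]

theorem dotProduct_diagScale (hN : 0 ≤ N) (hS : 0 ≤ S) (p q : Fin 3 → ℝ) :
    diagScale N S p ⬝ᵥ diagScale N S q =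
      p 0 * q 0 / (N * S) + p 1 * q 1 / N + p 2 * q 2 / S := by
  simp only [diagScale, dotProduct, Fin.sum_univ_three, cons_val_zero, cons_val_one,
    cons_val_two, head_cons, tail_cons]
  rw [div_mul_div_comm, div_mul_div_comm, div_mul_div_comm,
    Real.mul_self_sqrt (mul_nonneg hN hS), Real.mul_self_sqrt hN, Real.mul_self_sqrt hS]

theorem triple_product_diagScale (hN : 0 ≤ N) (hS : 0 ≤ S) (p q r : Fin 3 → ℝ) :
    diagScale N S p ⬝ᵥ diagScale N S q ⨯₃ diagScale N S r = p ⬝ᵥ q ⨯₃ r / (N * S) := by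
  have scale : √(N * S) * √N * √S = N * S := by
    rw [Real.sqrt_mul hN]
    linear_combination √S ^ 2 * Real.sq_sqrt hN + N * Real.sq_sqrt hS
  rw [← scale]
  simp only [diagScale, cross_apply, dotProduct, Fin.sum_univ_three, cons_val_zero, cons_val_one,
    cons_val_two, head_cons, tail_cons]
  ring

end diagScale

theorem standard_configuration_realizes (u v w δ : ℝ)
    (hδ : δ ^ 2 = 1 - u ^ 2 - v ^ 2 - w ^ 2 + 2 * u * v * w)
    (hS : 0 < 3 + 2 * (u + v + w))
    (hN : 0 < 2 * (u + 1) - (v + w) ^ 2)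
    (r₁ r₂ r₃ : Fin 3 → ℝ)
    (hr₁ : r₁ = ![Real.sqrt ((2 * (u + 1) - (v + w) ^ 2) / (3 + 2 * (u + v + w))), 0,
        (v + w + 1) / Real.sqrt (3 + 2 * (u + v + w))])
    (hr₂ : r₂ = ![(w * (u + v + 1) - (u + 1) * (v + 1) + w ^ 2) /
          Real.sqrt ((2 * (u + 1) - (v + w) ^ 2) * (3 + 2 * (u + v + w))),
        δ / Real.sqrt (2 * (u + 1) - (v + w) ^ 2),
        (u + w + 1) / Real.sqrt (3 + 2 * (u + v + w))])
    (hr₃ : r₃ = ![(v * (w + u + 1) - (w + 1) * (u + 1) + v ^ 2) /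
          Real.sqrt ((2 * (u + 1) - (v + w) ^ 2) * (3 + 2 * (u + v + w))),
        -δ / Real.sqrt (2 * (u + 1) - (v + w) ^ 2),
        (u + v + 1) / Real.sqrt (3 + 2 * (u + v + w))]) :
    r₁ ⬝ᵥ r₁ = 1 ∧ r₂ ⬝ᵥ r₂ = 1 ∧ r₃ ⬝ᵥ r₃ = 1 ∧
    r₂ ⬝ᵥ r₃ = u ∧ r₃ ⬝ᵥ r₁ = v ∧ r₁ ⬝ᵥ r₂ = w ∧
    r₁ ⬝ᵥ crossProduct r₂ r₃ = δ ∧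
    r₁ + r₂ + r₃ = ![0, 0, Real.sqrt (3 + 2 * (u + v + w))] := by
  set S := 3 + 2 * (u + v + w)
  set N := 2 * (u + 1) - (v + w) ^ 2
  replace hr₁ : r₁ = diagScale N S ![N, 0, v + w + 1] := by
    rw [hr₁, diagScale, Real.sqrt_div_eq_div_sqrt_mul hN.le]
    simp
  replace hr₂ : r₂ = diagScale N S ![w * (u + v + 1) - (u + 1) * (v + 1) + w ^ 2, δ, u + w + 1] :=
    hr₂
  replace hr₃ : r₃ = diagScale N S ![v * (w + u + 1) - (w + 1) * (u + 1) + v ^ 2, -δ, u + v + 1] :=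
    hr₃
  have hsum : r₁ + r₂ + r₃ = diagScale N S ![0, 0, S] := by
    rw [hr₁, hr₂, hr₃, diagScale_add, diagScale_add]
    congr 1
    ext i; fin_cases i <;> simp <;> ring
  subst hr₁ hr₂ hr₃
  simp only [dotProduct_diagScale hN.le hS.le, triple_product_diagScale hN.le hS.le, hsum]
  simp only [cross_apply, dotProduct, Fin.sum_univ_three, cons_val_zero, cons_val_one, cons_val_two,
    head_cons, tail_cons]
  refine ⟨?_, ?_, ?_, ?_, ?_, ?_, ?_, by simp [diagScale, Real.div_sqrt]⟩
  all_goals field_simp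
  · ring
  · linear_combination S * hδ
  · linear_combination S * hδ
  · linear_combination -S * hδ
  · ring
  · ring
  · ring
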